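/- For every k ≥ 1/4 and every t ∈ (0, ∞), one has √((k·(log t)² + 1)² − (log t)²) + (k·(log t)² + 1) − ((t−1)/(t+1))·log t > 0. -/
import Mathlib


open Real

/-- The inequality `r̂(t) > 0` from the Knowles–Sternberg rank-one convexity criterion:
for `k ≥ 1/4` and `t > 0`,
`√((k·(log t)² + 1)² − (log t)²) + (k·(log t)² + 1) − ((t−1)/(t+1))·log t > 0`. -/
theorem rhat_pos (k : ℝ) (hk : 1 / 4 ≤ k) (t : ℝ) (ht : 0 < t) :
    0 < Real.sqrt ((k * Real.log t ^ 2 + 1) ^ 2 - Real.log t ^ 2)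
        + (k * Real.log t ^ 2 + 1) - (t - 1) / (t + 1) * Real.log t := by
  set L := Real.log t with hL
  have hs : 0 ≤ Real.sqrt ((k * L ^ 2 + 1) ^ 2 - L ^ 2) := Real.sqrt_nonneg _
  have hmain : (t - 1) / (t + 1) * L < k * L ^ 2 + 1 := by
    have ht1 : 0 < t + 1 := by linarith
    have hc : |(t - 1) / (t + 1)| < 1 := by
      rw [abs_div, abs_of_pos ht1, div_lt_one ht1]
      rw [abs_lt]
      constructor <;> linarith
    rcases eq_or_ne L 0 with h0 | h0
    · rw [h0]; norm_num
    · have hLpos : 0 < |L| := abs_pos.mpr h0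
      have h1 : (t - 1) / (t + 1) * L ≤ |(t - 1) / (t + 1) * L| := le_abs_self _
      have h2 : |(t - 1) / (t + 1) * L| < |L| := by
        rw [abs_mul]
        calc |(t - 1) / (t + 1)| * |L| < 1 * |L| := by
              exact mul_lt_mul_of_pos_right hc hLpos
          _ = |L| := one_mul _
      have h3 : |L| ≤ k * L ^ 2 + 1 := by
        nlinarith [sq_nonneg (|L| - 2), sq_abs L, sq_nonneg L]
      linarith
  linarith
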